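/- For every δ > 0 and every finite sequence of points a_1, …, a_m ∈ R^n there exists p_0 = p_0(a_1,…,a_m, δ) such that for every prime p ≥ p_0 there exist N ≥ n and points s_1, …, s_m ∈ R^N such that the set {s_1, …, s_m} is Euclidean sub-p-toral and ‖ι(a_i) − s_i‖ < δ for every i, where ι : R^n → R^N is the standard inclusion (padding with zero coordinates). -/

import Mathlib

/-- A finite set `X ⊆ ℝ^k` is *Euclidean sub-p-toral* if some isometric copy of `X`
in a possibly larger `ℝ^n` is contained in an orbit of a finite group of isometries
of `ℝ^n` isomorphic to `(ℤ/p)^α`. -/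
def EuclideanSubPToral (p : ℕ) {k : ℕ} (X : Set (EuclideanSpace ℝ (Fin k))) : Prop :=
  ∃ n : ℕ, k ≤ n ∧
    ∃ ι : X → EuclideanSpace ℝ (Fin n),
      (∀ x y : X, dist (ι x) (ι y) = dist (x : EuclideanSpace ℝ (Fin k)) y) ∧
      ∃ (G : Subgroup (EuclideanSpace ℝ (Fin n) ≃ᵢ EuclideanSpace ℝ (Fin n))) (α : ℕ),
        Nonempty (G ≃* Multiplicative (Fin α → ZMod p)) ∧
        ∃ v : EuclideanSpace ℝ (Fin n), ∀ x : X, ∃ g ∈ G,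
          (g : EuclideanSpace ℝ (Fin n) ≃ᵢ EuclideanSpace ℝ (Fin n)) v = ι x

/-- The standard inclusion `ℝ^n → ℝ^N`, padding with zero coordinates. -/
noncomputable def padInclusion (n N : ℕ) (x : EuclideanSpace ℝ (Fin n)) :
    EuclideanSpace ℝ (Fin N) :=
  (WithLp.equiv 2 (Fin N → ℝ)).symm
    (fun j => if h : (j : ℕ) < n then (WithLp.equiv 2 (Fin n → ℝ)) x ⟨j, h⟩ else 0)

/-!
Identify `ℝ^{2n}` with `ℂⁿ`. The group `(ℤ/p)ⁿ` acts isometrically by rotating each complex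
coordinate through a `p`-th root of unity `ζ`; the orbit of `-c`, where `c = (R i, …, R i)`,
translated by `c` consists of the points with coordinates `R i (1 - ζ)`. Since
`R i (1 - e^{iθ}) = Rθ + O(Rθ²)`, every real `x` with `|x| ≤ M` lies within
`M² / R + π R / p` of such a coordinate, which is small once `R` is large and then `p` is large
compared with `R`. All the approximants of `a₁, …, a_m` lie in one orbit.
-/

open Complex

namespace IsometryEquiv

variable {E F : Type*} [PseudoEMetricSpace E] [PseudoEMetricSpace F]

def permCongrHom (f : E ≃ᵢ F) : (E ≃ᵢ E) →* (F ≃ᵢ F) where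
  toFun g := f.symm.trans (g.trans f)
  map_one' := by ext x; simp
  map_mul' g h := by ext x; simp [mul_apply]

@[simp]
lemma permCongrHom_apply (f : E ≃ᵢ F) (g : E ≃ᵢ E) (x : F) :
    permCongrHom f g x = f (g (f.symm x)) := rfl

lemma permCongrHom_injective (f : E ≃ᵢ F) : Function.Injective (permCongrHom f) := by
  intro g h hgh
  ext x
  simpa using congr($hgh (f x))

end IsometryEquiv

lemma EuclideanSubPToral.of_isometryEquiv {p k d : ℕ} {E : Type*} [MetricSpace E]
    (f : E ≃ᵢ EuclideanSpace ℝ (Fin d)) (hkd : k ≤ d)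
    {X : Set (EuclideanSpace ℝ (Fin k))} (ι : X → E)
    (hι : ∀ x y : X, dist (ι x) (ι y) = dist (x : EuclideanSpace ℝ (Fin k)) y)
    (G : Subgroup (E ≃ᵢ E)) {α : ℕ} (hG : G ≃* Multiplicative (Fin α → ZMod p))
    (v : E) (hv : ∀ x : X, ∃ g ∈ G, g v = ι x) : EuclideanSubPToral p X := by
  refine ⟨d, hkd, fun x => f (ι x), fun x y => by rw [f.dist_eq, hι],
    G.map f.permCongrHom, α, ⟨(G.equivMapOfInjective _ f.permCongrHom_injective).symm.trans hG⟩,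
    f v, fun x => ?_⟩
  obtain ⟨g, hg, hgv⟩ := hv x
  exact ⟨_, Subgroup.mem_map_of_mem _ hg, by simp [hgv]⟩

noncomputable def torusRotation (n p : ℕ) [NeZero p] :
    Multiplicative (Fin n → ZMod p) →* (EuclideanSpace ℂ (Fin n) ≃ᵢ EuclideanSpace ℂ (Fin n)) where
  toFun k := (LinearIsometryEquiv.piLpCongrRight 2
    fun j => rotation (ZMod.toCircle (k.toAdd j))).toIsometryEquiv
  map_one' := by ext z j; simp
  map_mul' k l := by ext z j; simp [IsometryEquiv.mul_apply, AddChar.map_add_eq_mul]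

section Torus

variable {n p : ℕ} [NeZero p]

@[simp]
lemma torusRotation_apply (k : Multiplicative (Fin n → ZMod p)) (z : EuclideanSpace ℂ (Fin n))
    (j : Fin n) : torusRotation n p k z j = ZMod.toCircle (k.toAdd j) * z j := by
  simp [torusRotation]

lemma torusRotation_injective : Function.Injective (torusRotation n p) := by
  refine (injective_iff_map_eq_one _).2 fun k hk => ?_
  refine Multiplicative.toAdd.injective (funext fun j => ?_)
  have h := congr($hk (WithLp.toLp 2 fun _ => 1) j)
  simp only [torusRotation_apply, mul_one] at h
  exact ZMod.injective_toCircle (by simpa [Circle.ext_iff] using h)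

end Torus

-- `z ↦ (Re z₀, …, Re zₙ₋₁, Im z₀, …, Im zₙ₋₁)`
noncomputable def complexEuclideanEquiv (n : ℕ) :
    EuclideanSpace ℂ (Fin n) ≃ₗᵢ[ℝ] EuclideanSpace ℝ (Fin (2 * n)) :=
  ((Pi.orthonormalBasis fun _ : Fin n => Complex.orthonormalBasisOneI).reindex
    ((Equiv.sigmaEquivProd _ _).trans ((Equiv.prodComm _ _).trans finProdFinEquiv))).repr

lemma complexEuclideanEquiv_ofReal {n : ℕ} (x : EuclideanSpace ℝ (Fin n)) :
    complexEuclideanEquiv n (WithLp.toLp 2 fun j => (x j : ℂ)) = padInclusion n (2 * n) x := by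
  ext m
  obtain ⟨⟨a, j⟩, rfl⟩ := finProdFinEquiv.surjective m
  fin_cases a <;> simp [complexEuclideanEquiv, padInclusion]

lemma norm_ofReal_sub_mul_one_sub_exp_le {R x : ℝ} (hR : 0 < R) (hx : |x| ≤ R) (θ : ℝ) :
    ‖(x : ℂ) - R * I * (1 - exp (θ * I))‖ ≤ x ^ 2 / R + R * |x / R - θ| := by
  set φ := x / R
  have hφ : |φ| ≤ 1 := by rw [abs_div, abs_of_pos hR]; exact div_le_one_of_le₀ hx hR.le
  have hsplit : (x : ℂ) - R * I * (1 - exp (θ * I)) =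
      R * I * ((exp (φ * I) - 1 - φ * I) + exp (φ * I) * (exp (I * ↑(θ - φ)) - 1)) := by
    have hxφ : (x : ℂ) = R * φ := by rw [← ofReal_mul, mul_div_cancel₀ _ hR.ne']
    rw [hxφ, mul_sub (exp _), mul_one, ← Complex.exp_add]
    push_cast
    ring_nf
    rw [I_sq]
    ring
  have hquad : ‖exp (φ * I) - 1 - φ * I‖ ≤ φ ^ 2 := by
    simpa [sq_abs] using norm_exp_sub_one_sub_id_le (x := φ * I) (by simpa using hφ)
  have hchord : ‖exp (φ * I) * (exp (I * ↑(θ - φ)) - 1)‖ ≤ |φ - θ| := by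
    rw [norm_mul, norm_exp_ofReal_mul_I, one_mul, abs_sub_comm]
    exact Real.norm_exp_I_mul_ofReal_sub_one_le
  calc _ ≤ R * (φ ^ 2 + |φ - θ|) := by
        rw [hsplit, norm_mul, norm_mul, norm_I, mul_one, norm_real, Real.norm_of_nonneg hR.le]
        gcongr
        exact (norm_add_le _ _).trans (add_le_add hquad hchord)
    _ = x ^ 2 / R + R * |x / R - θ| := by
        simp only [φ]
        field_simp

open Real in
lemma exists_norm_ofReal_sub_mul_one_sub_toCircle_le {R x : ℝ} (hR : 0 < R) (hx : |x| ≤ R)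
    (p : ℕ) [NeZero p] :
    ∃ k : ZMod p, ‖(x : ℂ) - R * I * (1 - ZMod.toCircle k)‖ ≤ x ^ 2 / R + π * R / p := by
  have hp : (0 : ℝ) < p := Nat.cast_pos.2 (NeZero.pos p)
  set r := round (p * x / (2 * π * R))
  refine ⟨r, ?_⟩
  have hθ : (ZMod.toCircle (r : ZMod p) : ℂ) = exp (↑(2 * π * r / p) * I) := by
    rw [ZMod.toCircle_intCast]
    push_cast
    ring_nf
  have hround : |x / R - 2 * π * r / p| ≤ π / p := by
    have h := abs_sub_round (p * x / (2 * π * R))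
    have hscale : x / R - 2 * π * r / p = 2 * π / p * (p * x / (2 * π * R) - r) := by
      field_simp
    rw [hscale, abs_mul, abs_of_pos (by positivity)]
    calc 2 * π / p * |p * x / (2 * π * R) - r| ≤ 2 * π / p * (1 / 2) := by gcongr
      _ = π / p := by ring
  rw [hθ]
  calc _ ≤ x ^ 2 / R + R * |x / R - 2 * π * r / p| :=
        norm_ofReal_sub_mul_one_sub_exp_le hR hx _
    _ ≤ x ^ 2 / R + R * (π / p) := by gcongr
    _ = x ^ 2 / R + π * R / p := by ring

open Real in
lemma exists_radius_norm_ofReal_sub_mul_one_sub_toCircle_lt {ε M : ℝ} (hε : 0 < ε)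
    (hM : 0 ≤ M) :
    ∃ R : ℝ, ∃ p₀ : ℕ, ∀ (p : ℕ) [NeZero p], p₀ ≤ p → ∀ x : ℝ, |x| ≤ M →
      ∃ k : ZMod p, ‖(x : ℂ) - R * I * (1 - ZMod.toCircle k)‖ < ε := by
  set R := M + 1 + 2 * M ^ 2 / ε
  have hMR : M + 1 ≤ R := le_add_of_nonneg_right (by positivity)
  have hR : 0 < R := by linarith
  have hsq : M ^ 2 / R ≤ ε / 2 := by
    rw [div_le_iff₀ hR]
    have hcancel : ε / 2 * (2 * M ^ 2 / ε) = M ^ 2 := by field_simp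
    nlinarith
  refine ⟨R, ⌈2 * π * R / ε⌉₊ + 1, fun p _ hp x hx => ?_⟩
  have hpR : π * R / p < ε / 2 := by
    have hp' : 2 * π * R / ε < p := by
      have hceil := Nat.le_ceil (2 * π * R / ε)
      have hp_real : ((⌈2 * π * R / ε⌉₊ + 1 : ℕ) : ℝ) ≤ p := by exact_mod_cast hp
      push_cast at hp_real
      linarith
    rw [div_lt_iff₀ hε] at hp'
    rw [div_lt_iff₀ (Nat.cast_pos.2 (NeZero.pos p))]
    linarith
  obtain ⟨k, hk⟩ := exists_norm_ofReal_sub_mul_one_sub_toCircle_le hR (hx.trans (by linarith)) p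
  have hx2 : x ^ 2 ≤ M ^ 2 := sq_le_sq' (abs_le.1 hx).1 (abs_le.1 hx).2
  refine ⟨k, hk.trans_lt ?_⟩
  calc x ^ 2 / R + π * R / p < M ^ 2 / R + ε / 2 :=
        add_lt_add_of_le_of_lt (div_le_div_of_nonneg_right hx2 hR.le) hpR
    _ ≤ ε := by linarith

lemma PiLp.norm_sq_le_card_mul_sq {ι : Type*} [Fintype ι] {β : ι → Type*}
    [∀ i, SeminormedAddCommGroup (β i)] (x : PiLp 2 β) {ε : ℝ} (h : ∀ i, ‖x i‖ ≤ ε) :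
    ‖x‖ ^ 2 ≤ Fintype.card ι * ε ^ 2 := by
  rw [PiLp.norm_sq_eq_of_L2]
  calc ∑ i, ‖x i‖ ^ 2 ≤ ∑ _i : ι, ε ^ 2 :=
        Finset.sum_le_sum fun i _ => pow_le_pow_left₀ (norm_nonneg _) (h i) 2
    _ = Fintype.card ι * ε ^ 2 := by simp

lemma exists_norm_ofReal_sub_torusRotation_lt {m n : ℕ} {δ : ℝ} (hδ : 0 < δ)
    (a : Fin m → EuclideanSpace ℝ (Fin n)) :
    ∃ c : EuclideanSpace ℂ (Fin n), ∃ p₀ : ℕ, ∀ (p : ℕ) [NeZero p], p₀ ≤ p → ∀ i, ∃ k,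
      ‖(WithLp.toLp 2 fun j => (a i j : ℂ)) - (c + torusRotation n p k (-c))‖ < δ := by
  set M := ∑ i, ‖a i‖
  have haM (i : Fin m) (j : Fin n) : |a i j| ≤ M :=
    (PiLp.norm_apply_le (a i) j).trans (Finset.single_le_sum (fun i _ => norm_nonneg (a i))
      (Finset.mem_univ i))
  set ε := δ / (n + 1)
  obtain ⟨R, p₀, hR⟩ := exists_radius_norm_ofReal_sub_mul_one_sub_toCircle_lt (ε := ε)
    (by positivity) (Finset.sum_nonneg fun i _ => norm_nonneg (a i))
  refine ⟨WithLp.toLp 2 fun _ => R * I, p₀, fun p _ hp i => ?_⟩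
  choose k hk using fun j => hR p hp (a i j) (haM i j)
  refine ⟨Multiplicative.ofAdd k, lt_of_pow_lt_pow_left₀ 2 hδ.le ?_⟩
  calc _ ≤ Fintype.card (Fin n) * ε ^ 2 := PiLp.norm_sq_le_card_mul_sq _ fun j => ?_
    _ < δ ^ 2 := by
      rw [Fintype.card_fin, div_pow, mul_div_assoc', div_lt_iff₀ (by positivity)]
      nlinarith [sq_pos_of_pos hδ, mul_nonneg (sq_nonneg δ) (sq_nonneg (n : ℝ)),
        mul_nonneg (sq_nonneg δ) (Nat.cast_nonneg n : (0 : ℝ) ≤ n)]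
  refine le_of_eq_of_le ?_ (hk j).le
  simp only [PiLp.sub_apply, PiLp.add_apply, PiLp.neg_apply, torusRotation_apply, toAdd_ofAdd]
  congr 1
  ring

/-- **Theorem 11 (sub-p-toral sets are dense among all finite sets).** For every `δ > 0`
and points `a₁, …, a_m ∈ ℝⁿ` there is `p₀` such that for every prime `p ≥ p₀` there are
`N ≥ n` and a Euclidean sub-p-toral set `{s₁, …, s_m} ⊆ ℝ^N` with `‖ι(aᵢ) - sᵢ‖ < δ` for
all `i`, where `ι : ℝⁿ → ℝ^N` is the standard inclusion. -/
theorem subPToral_approximation (δ : ℝ) (hδ : 0 < δ) {n m : ℕ}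
    (a : Fin m → EuclideanSpace ℝ (Fin n)) :
    ∃ p₀ : ℕ, ∀ p : ℕ, p.Prime → p₀ ≤ p →
      ∃ N : ℕ, n ≤ N ∧ ∃ s : Fin m → EuclideanSpace ℝ (Fin N),
        EuclideanSubPToral p (Set.range s) ∧
        ∀ i : Fin m, ‖padInclusion n N (a i) - s i‖ < δ := by
  obtain ⟨c, p₀, happrox⟩ := exists_norm_ofReal_sub_torusRotation_lt hδ a
  refine ⟨p₀, fun p hp hp₀ => ?_⟩
  have : NeZero p := ⟨hp.ne_zero⟩
  choose k hk using happrox p hp₀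
  set e := complexEuclideanEquiv n
  refine ⟨2 * n, by omega, fun i => e (c + torusRotation n p (k i) (-c)), ?_, fun i => ?_⟩
  · refine EuclideanSubPToral.of_isometryEquiv e.toIsometryEquiv le_rfl (fun x => e.symm x - c)
      (fun x y => by simp) (torusRotation n p).range
      (MonoidHom.ofInjective torusRotation_injective).symm (-c) ?_
    rintro ⟨_, i, rfl⟩
    exact ⟨_, ⟨k i, rfl⟩, by simp⟩
  · rw [← complexEuclideanEquiv_ofReal, ← map_sub, LinearIsometryEquiv.norm_map]
    exact hk i
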